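/- arXiv:2506.17460 — 5 statements merged into one kernel-verified Lean document; each statement's English description precedes it below -/
import Mathlib

section
/- Let s = (σ_n)_{n∈ℕ} be a sequence of substitutions over Σ. If a word α ∈ Σ^+ ∪ Σ^ω is generated by s (that is, α = lim_{n→∞} σ_0⋯σ_n(a_n) for some sequence of letters (a_n)_{n∈ℕ}), then α is directed by s. -/
universe u

variable {A : Type u}

/-- Finite or infinite words over `A`, plus `⊥` (`Word.bot`) representing divergence. -/
inductive Word (A : Type u) : Type u
  | fin : List A → Word A
  | inf : (ℕ → A) → Word A
  | bot : Word A

namespace Word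

/-- `α` lies in `Σ⁺ ∪ Σ^ω`: it is a nonempty finite word or an infinite word. -/
def IsProper : Word A → Prop
  | fin l => l ≠ []
  | inf _ => True
  | bot => False

/-- `α` is an infinite word. -/
def IsInf : Word A → Prop
  | inf _ => True
  | _ => False

/-- Concatenation, with the conventions `α·x = α` for infinite `α`, `⊥·x = ⊥`,
and `u·⊥ = ⊥` for finite `u`. -/
def cat : Word A → Word A → Word A
  | fin u, fin v => fin (u ++ v)
  | fin u, inf f => inf (fun n => if h : n < u.length then u.get ⟨n, h⟩ else f (n - u.length))
  | fin _, bot => bot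
  | inf f, _ => inf f
  | bot, _ => bot

/-- The finite word `u` is a prefix of the word `α`. -/
def hasPrefix : Word A → List A → Prop
  | fin v, u => u <+: v
  | inf f, u => u = List.ofFn (fun i : Fin u.length => f i.1)
  | bot, _ => False

/-- The periodic infinite word `u^ω` for a nonempty finite word `u`. -/
def perW (u : List A) (hu : u ≠ []) : Word A :=
  inf (fun n => u.get ⟨n % u.length, Nat.mod_lt n (List.length_pos_iff.mpr hu)⟩)

end Word

/-- Concatenation of a finite list of finite words. -/
def flat : List (List A) → List A
  | [] => []
  | x :: t => x ++ flat t

/-- A substitution: a non-erasing morphism `Σ* → Σ*`, given by its images on letters. -/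
def Subst (A : Type u) : Type u := {f : A → List A // ∀ a, f a ≠ []}

namespace Subst

/-- Application of a substitution to a finite word. -/
def apply (σ : Subst A) : List A → List A
  | [] => []
  | a :: t => σ.1 a ++ apply σ t

theorem apply_ne_nil (σ : Subst A) : ∀ {w : List A}, w ≠ [] → σ.apply w ≠ []
  | [], hw => absurd rfl hw
  | a :: t, _ => by
    cases hσ : σ.1 a with
    | nil => exact absurd hσ (σ.2 a)
    | cons b r => simp [apply, hσ]

/-- Composition of substitutions (`comp σ μ = σ ∘ μ`). -/
def comp (σ μ : Subst A) : Subst A :=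
  ⟨fun a => σ.apply (μ.1 a), fun a => σ.apply_ne_nil (μ.2 a)⟩

/-- The identity substitution. -/
def idS (A : Type u) : Subst A :=
  ⟨fun a => [a], fun _ => by simp⟩

/-- Iterated application `σ^n`. -/
def iter (σ : Subst A) : ℕ → List A → List A
  | 0, w => w
  | n + 1, w => σ.apply (iter σ n w)

/-- Application of a substitution to an infinite word. -/
def applyInf (σ : Subst A) (f : ℕ → A) : ℕ → A :=
  fun n => (σ.apply ((List.range (n + 1)).map f)).getD n (f 0)

/-- Application of a substitution to a (finite, infinite or bottom) word. -/
def applyWord (σ : Subst A) : Word A → Word A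
  | Word.fin l => Word.fin (σ.apply l)
  | Word.inf f => Word.inf (σ.applyInf f)
  | Word.bot => Word.bot

/-- `σ` is positive: every letter `b` appears in `σ(c)` for every letter `c`. -/
def Positive (σ : Subst A) : Prop := ∀ b c : A, b ∈ σ.1 c

/-- `σ` is left-proper: all images of letters begin with the same letter. -/
def LeftProper (σ : Subst A) : Prop := ∃ b : A, ∀ a : A, (σ.1 a).head? = some b

end Subst

/-- `applyComp s n w = σ₀⋯σ_{n-1}(w)`. -/
def applyComp (s : ℕ → Subst A) (n : ℕ) (w : List A) : List A :=
  (List.range n).foldr (fun i acc => (s i).apply acc) w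

/-- `applySeg s n m w = σ_n⋯σ_m(w)` (for `n ≤ m`). -/
def applySeg (s : ℕ → Subst A) (n m : ℕ) (w : List A) : List A :=
  (List.range (m + 1 - n)).foldr (fun i acc => (s (n + i)).apply acc) w

/-- A directive sequence is weakly primitive if for every `n` there is `m ≥ n`
such that `σ_n ∘ ⋯ ∘ σ_m` is positive. -/
def WeaklyPrimitive (s : ℕ → Subst A) : Prop :=
  ∀ n, ∃ m, n ≤ m ∧ ∀ b c : A, b ∈ applySeg s n m [c]

open Classical in
/-- The limit of a sequence of finite words: the eventual value if the sequence is
eventually constant; the infinite word β if for every `j` the first `j` letters are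
eventually those of β; `Word.bot` otherwise. -/
noncomputable def limWord (u : ℕ → List A) : Word A :=
  if h : ∃ v : List A, ∃ N : ℕ, ∀ n, N ≤ n → u n = v then Word.fin h.choose
  else if h2 : ∃ β : ℕ → A, ∀ j : ℕ, ∃ N : ℕ, ∀ n, N ≤ n → (u n).take j = (List.range j).map β
    then Word.inf h2.choose
  else Word.bot

/-- `σ^ω(u) = lim_n σ^n(u)`, with `σ^ω(ε) = ε`. -/
noncomputable def Subst.omegaPow (σ : Subst A) : List A → Word A
  | [] => Word.fin []
  | w@(_ :: _) => limWord (fun n => σ.iter n w)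

/-- The directive sequence `s` directs the word `α`. -/
def Directs (s : ℕ → Subst A) (α : Word A) : Prop :=
  ∃ β : ℕ → Word A, β 0 = α ∧ (∀ n, (β n).IsProper) ∧ ∀ n, β n = (s n).applyWord (β (n + 1))

/-- `(σ_n, a_n)` is congenial: `σ_{n+1}(a_{n+1})` begins with `a_n`. -/
def Congenial (s : ℕ → Subst A) (a : ℕ → A) : Prop :=
  ∀ n, ((s (n + 1)).1 (a (n + 1))).head? = some (a n)

/-- The word generated by `(σ_n, a_n)`: `lim_n σ₀⋯σ_n(a_n)`. -/
noncomputable def genWord (s : ℕ → Subst A) (a : ℕ → A) : Word A :=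
  limWord (fun n => applyComp s (n + 1) [a n])

/-- `α` is an `s`-congenial word. -/
def SCongenial (s : ℕ → Subst A) (α : Word A) : Prop :=
  α.IsProper ∧ ∃ a : ℕ → A, Congenial s a ∧ genWord s a = α

/-- Auxiliary function for `segs`. -/
def segsAux [DecidableEq A] : List A → List A → A → List A → List (A × List A)
  | [], _, b, cur => [(b, cur.reverse)]
  | x :: t, seen, b, cur =>
    if x ∈ seen then segsAux t seen b (x :: cur)
    else (b, cur.reverse) :: segsAux t (x :: seen) x []

/-- The factorisation `w = b₁v₁⋯b_dv_d` of a word based on first occurrences of letters,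
returned as the list `[(b₁, v₁), …, (b_d, v_d)]`. -/
def segs [DecidableEq A] : List A → List (A × List A)
  | [] => []
  | x :: t => segsAux t [x] x []

/-- Substitutions `σ, τ` are equivalent modulo the monoid `M`:
`segments_σ(a, h) = segments_τ(a, h)` for every letter `a` and homomorphism `h : Σ* → M`. -/
def SegEquiv [DecidableEq A] (M : Type*) [Monoid M] (σ τ : Subst A) : Prop :=
  ∀ (a : A) (h : FreeMonoid A →* M),
    (segs (σ.1 a)).map (fun p => (p.1, h (FreeMonoid.ofList p.2))) =
    (segs (τ.1 a)).map (fun p => (p.1, h (FreeMonoid.ofList p.2)))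

/-- The setoid of substitutions modulo `M`; its quotient is `Ξ_M`. -/
def segSetoid (A : Type u) [DecidableEq A] (M : Type*) [Monoid M] : Setoid (Subst A) where
  r := SegEquiv M
  iseqv := ⟨fun _ _ _ => rfl, fun h a hm => (h a hm).symm,
    fun h1 h2 a hm => (h1 a hm).trans (h2 a hm)⟩

section AuxGen

open Filter

/-- Along an ultrafilter, a function into a finite type is a.e. constant. -/
lemma ult_const {X : Type*} [Finite X] (U : Ultrafilter ℕ) (f : ℕ → X) :
    ∃ x, ∀ᶠ n in (U : Filter ℕ), f n = x := by
  by_contra h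
  push_neg at h
  have h' : ∀ x : X, ∀ᶠ n in (U : Filter ℕ), f n ≠ x := fun x =>
    h x
  have h'' : ∀ᶠ n in (U : Filter ℕ), ∀ x : X, f n ≠ x := Filter.eventually_all.mpr h'
  rcases h''.exists with ⟨n, hn⟩
  exact hn (f n) rfl

/-- The `n`-th letter of a word, as an `Option`. -/
def wget : Word A → ℕ → Option A
  | Word.fin l, n => l[n]?
  | Word.inf f, n => some (f n)
  | Word.bot, _ => none

lemma wget_ext {x y : Word A} (hx : x ≠ Word.bot) (hy : y ≠ Word.bot)
    (h : ∀ n, wget x n = wget y n) : x = y := by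
  cases x with
  | bot => exact absurd rfl hx
  | fin l =>
    cases y with
    | bot => exact absurd rfl hy
    | fin l' => exact congrArg Word.fin (List.ext_getElem? h)
    | inf f =>
      have := h l.length
      rw [show wget (Word.fin l) l.length = none from List.getElem?_eq_none le_rfl] at this
      exact absurd this (by simp [wget])
  | inf f =>
    cases y with
    | bot => exact absurd rfl hy
    | fin l' =>
      have := h l'.length
      rw [show wget (Word.fin l') l'.length = none from List.getElem?_eq_none le_rfl] at this
      exact absurd this (by simp [wget])
    | inf f' =>
      have hf : ∀ n, f n = f' n := fun n => Option.some_injective _ (h n)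
      exact congrArg Word.inf (funext hf)

/-- The prefix of length (at most) `m` of a word. -/
def pref : Word A → ℕ → List A
  | Word.fin l, m => l.take m
  | Word.inf f, m => (List.range m).map f
  | Word.bot, _ => []

lemma getElem?_pref (x : Word A) {m i : ℕ} (h : i < m) : (pref x m)[i]? = wget x i := by
  cases x with
  | fin l => simp [pref, wget, List.getElem?_take, h]
  | inf f => simp [pref, wget, h]
  | bot => simp [pref, wget]

lemma length_pref_le (x : Word A) (m : ℕ) : (pref x m).length ≤ m := by
  cases x with
  | fin l => simp [pref]
  | inf f => simp [pref]
  | bot => simp [pref]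

namespace Subst

lemma apply_append (σ : Subst A) (u v : List A) :
    σ.apply (u ++ v) = σ.apply u ++ σ.apply v := by
  induction u with
  | nil => rfl
  | cons a t ih => simp [Subst.apply, ih]

lemma length_le_apply (σ : Subst A) (w : List A) : w.length ≤ (σ.apply w).length := by
  induction w with
  | nil => simp [Subst.apply]
  | cons a t ih =>
    have h1 : 1 ≤ (σ.1 a).length := List.length_pos_iff.mpr (σ.2 a)
    simp only [Subst.apply, List.length_append, List.length_cons]
    omega

lemma getElem?_apply_take (σ : Subst A) (l : List A) (i : ℕ) :
    (σ.apply l)[i]? = (σ.apply (l.take (i+1)))[i]? := by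
  by_cases h : l.length ≤ i + 1
  · rw [List.take_of_length_le h]
  · have hl : l = l.take (i+1) ++ l.drop (i+1) := (List.take_append_drop _ _).symm
    conv_lhs => rw [hl]
    rw [σ.apply_append]
    have hlen : i < (σ.apply (l.take (i+1))).length := by
      have h2 := σ.length_le_apply (l.take (i+1))
      rw [List.length_take] at h2
      omega
    rw [List.getElem?_append, if_pos hlen]

end Subst

lemma wget_applyWord (σ : Subst A) (x : Word A) (i : ℕ) (hx : x ≠ Word.bot) :
    wget (σ.applyWord x) i = (σ.apply (pref x (i+1)))[i]? := by
  cases x with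
  | fin l => exact σ.getElem?_apply_take l i
  | inf f =>
    show some (σ.applyInf f i) = _
    unfold Subst.applyInf
    have hlen : i < (σ.apply ((List.range (i+1)).map f)).length := by
      have h2 := σ.length_le_apply ((List.range (i+1)).map f)
      simp only [List.length_map, List.length_range] at h2
      omega
    rw [List.getD_eq_getElem?_getD, List.getElem?_eq_getElem hlen]
    simp [pref]
  | bot => exact absurd rfl hx

lemma applyWord_ne_bot (σ : Subst A) {x : Word A} (hx : x ≠ Word.bot) :
    σ.applyWord x ≠ Word.bot := by
  cases x with
  | fin l => simp [Subst.applyWord]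
  | inf f => simp [Subst.applyWord]
  | bot => exact absurd rfl hx

lemma foldr_apply_ne_nil (s : ℕ → Subst A) (l : List ℕ) {w : List A} (hw : w ≠ []) :
    l.foldr (fun i acc => (s i).apply acc) w ≠ [] := by
  induction l with
  | nil => exact hw
  | cons j t ih => exact (s j).apply_ne_nil ih

lemma applySeg_ne_nil (s : ℕ → Subst A) (k n : ℕ) {w : List A} (hw : w ≠ []) :
    applySeg s k n w ≠ [] := by
  unfold applySeg
  exact foldr_apply_ne_nil (fun i => s (k + i)) _ hw

lemma applySeg_succ (s : ℕ → Subst A) (k n : ℕ) (h : k + 1 ≤ n) (w : List A) :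
    applySeg s k n w = (s k).apply (applySeg s (k+1) n w) := by
  unfold applySeg
  have h1 : n + 1 - k = (n + 1 - (k+1)) + 1 := by omega
  rw [h1, List.range_succ_eq_map]
  rw [List.foldr_cons, List.foldr_map]
  have h3 : (fun (x : ℕ) (y : List A) => (s (k + Nat.succ x)).apply y)
      = (fun (i : ℕ) (acc : List A) => (s (k + 1 + i)).apply acc) := by
    funext i acc
    have hki : k + Nat.succ i = k + 1 + i := by omega
    rw [hki]
  rw [Nat.add_zero, h3]

lemma applyComp_eq_applySeg (s : ℕ → Subst A) (n : ℕ) (w : List A) :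
    applyComp s (n+1) w = applySeg s 0 n w := by
  unfold applyComp applySeg
  simp

end AuxGen

/-- If `α ∈ Σ⁺ ∪ Σ^ω` is generated by the directive sequence `s`
(i.e. `α = lim_n σ₀⋯σ_n(a_n)` for some sequence of letters `a`), then `α` is directed by `s`. -/
theorem generated_implies_directed {A : Type u} [Fintype A] [Nonempty A]
    (s : ℕ → Subst A) (α : Word A) (hα : α.IsProper)
    (hgen : ∃ a : ℕ → A, genWord s a = α) :
    Directs s α := by
  classical
  obtain ⟨a, ha⟩ := hgen
  set U : Ultrafilter ℕ := Filter.hyperfilter ℕ with hU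
  have hcof : ∀ k : ℕ, ∀ᶠ n in (U : Filter ℕ), k ≤ n := by
    intro k
    refine Filter.Eventually.filter_mono (Filter.hyperfilter_le_cofinite) ?_
    rw [Nat.cofinite_eq_atTop]
    exact Filter.eventually_ge_atTop k
  set d : A := Classical.arbitrary A with hd
  set v : ℕ → ℕ → List A := fun k n => applySeg s k n [a n] with hv
  have hvne : ∀ k n, v k n ≠ [] := fun k n => applySeg_ne_nil s k n (by simp)
  have hvrec : ∀ k n, k + 1 ≤ n → v k n = (s k).apply (v (k+1) n) :=
    fun k n h => applySeg_succ s k n h [a n]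
  -- letters of the limit words
  have hcex : ∀ k i : ℕ, ∃ x : A, ∀ᶠ n in (U : Filter ℕ), (v k n).getD i d = x :=
    fun k i => ult_const U _
  set c : ℕ → ℕ → A := fun k i => (hcex k i).choose with hcdef
  have hc : ∀ k i, ∀ᶠ n in (U : Filter ℕ), (v k n).getD i d = c k i :=
    fun k i => (hcex k i).choose_spec
  -- the limit words
  set β : ℕ → Word A := fun k =>
    if h : ∃ L, ∀ᶠ n in (U : Filter ℕ), (v k n).length = L then
      Word.fin ((List.range h.choose).map (c k))
    else Word.inf (c k) with hβ
  have hβbot : ∀ k, β k ≠ Word.bot := by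
    intro k
    rw [hβ]
    dsimp only
    split <;> simp
  -- Lemma B: pointwise convergence of letters along U
  have hB : ∀ k i, ∀ᶠ n in (U : Filter ℕ), (v k n)[i]? = wget (β k) i := by
    intro k i
    by_cases h : ∃ L, ∀ᶠ n in (U : Filter ℕ), (v k n).length = L
    · have hL := h.choose_spec
      have hβk : β k = Word.fin ((List.range h.choose).map (c k)) := by
        rw [hβ]; exact dif_pos h
      by_cases hi : i < h.choose
      · filter_upwards [hL, hc k i] with n hn hcn
        rw [hβk]
        have hilen : i < (v k n).length := by omega
        show (v k n)[i]? = ((List.range h.choose).map (c k))[i]?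
        rw [List.getElem?_eq_getElem hilen]
        have : (v k n)[i] = c k i := by
          rw [← List.getD_eq_getElem (v k n) d hilen, hcn]
        rw [this]
        simp [hi]
      · filter_upwards [hL] with n hn
        rw [hβk]
        show (v k n)[i]? = ((List.range h.choose).map (c k))[i]?
        rw [List.getElem?_eq_none (by omega), List.getElem?_eq_none (by simp; omega)]
    · have hβk : β k = Word.inf (c k) := by rw [hβ]; exact dif_neg h
      -- lengths go to infinity along U
      have hgt : ∀ᶠ n in (U : Filter ℕ), i < (v k n).length := by
        obtain ⟨x, hx⟩ := ult_const U (fun n => (⟨min ((v k n).length) (i+1), by omega⟩ : Fin (i+2)))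
        by_cases hxi : (x : ℕ) ≤ i
        · exfalso
          apply h
          refine ⟨(x : ℕ), ?_⟩
          filter_upwards [hx] with n hn
          have := congrArg (Fin.val) hn
          simp only at this
          omega
        · filter_upwards [hx] with n hn
          have := congrArg (Fin.val) hn
          simp only at this
          have hxv : (x : ℕ) = i + 1 := by omega
          omega
      filter_upwards [hgt, hc k i] with n hn hcn
      rw [hβk]
      show (v k n)[i]? = some (c k i)
      rw [List.getElem?_eq_getElem hn, ← hcn, List.getD_eq_getElem (v k n) d hn]
  -- Lemma C: convergence of prefixes along U
  have hC : ∀ k m, ∀ᶠ n in (U : Filter ℕ), (v k n).take m = pref (β k) m := by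
    intro k m
    have hall : ∀ᶠ n in (U : Filter ℕ), ∀ i ∈ Finset.range m, (v k n)[i]? = wget (β k) i :=
      (Filter.eventually_all_finset (Finset.range m)).mpr
        (fun i _ => hB k i)
    filter_upwards [hall] with n hn
    apply List.ext_getElem?
    intro i
    by_cases hi : i < m
    · rw [List.getElem?_take, if_pos hi, getElem?_pref (β k) hi]
      exact hn i (Finset.mem_range.mpr hi)
    · rw [List.getElem?_take, if_neg hi,
        List.getElem?_eq_none (le_trans (length_pref_le (β k) m) (by omega))]
  -- the desubstitution relation
  have hmain : ∀ k, β k = (s k).applyWord (β (k+1)) := by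
    intro k
    apply wget_ext (hβbot k) (applyWord_ne_bot (s k) (hβbot (k+1)))
    intro i
    obtain ⟨n, hn1, hn2, hn3⟩ := ((hB k i).and ((hC (k+1) (i+1)).and (hcof (k+1)))).exists
    rw [← hn1, hvrec k n hn3, (s k).getElem?_apply_take, hn2,
      wget_applyWord (s k) (β (k+1)) i (hβbot (k+1))]
  -- properness
  have hprop : ∀ k, (β k).IsProper := by
    intro k
    rw [hβ]
    dsimp only
    split
    · next h =>
      have hL := h.choose_spec
      obtain ⟨n, hn⟩ := hL.exists
      have hpos : 0 < (v k n).length := List.length_pos_iff.mpr (hvne k n)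
      show (List.range h.choose).map (c k) ≠ []
      simp only [ne_eq, List.map_eq_nil_iff, List.range_eq_nil]
      omega
    · trivial
  -- β 0 = α
  have hu : ∀ n, applyComp s (n+1) [a n] = v 0 n := fun n => applyComp_eq_applySeg s n [a n]
  have h0 : β 0 = α := by
    apply wget_ext (hβbot 0) (by intro hb; rw [hb] at hα; exact hα)
    intro i
    unfold genWord limWord at ha
    by_cases h1 : ∃ w : List A, ∃ N : ℕ, ∀ n, N ≤ n → applyComp s (n+1) [a n] = w
    · rw [dif_pos h1] at ha
      obtain ⟨N, hN⟩ := h1.choose_spec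
      have hev : ∀ᶠ n in (U : Filter ℕ), v 0 n = h1.choose := by
        filter_upwards [hcof N] with n hn
        rw [← hu n]
        exact hN n hn
      obtain ⟨n, hn1, hn2⟩ := ((hB 0 i).and hev).exists
      rw [← ha]
      show wget (β 0) i = h1.choose[i]?
      rw [← hn1, hn2]
    · rw [dif_neg h1] at ha
      by_cases h2 : ∃ g : ℕ → A, ∀ j : ℕ, ∃ N : ℕ, ∀ n, N ≤ n →
          (applyComp s (n+1) [a n]).take j = (List.range j).map g
      · rw [dif_pos h2] at ha
        obtain ⟨N, hN⟩ := h2.choose_spec (i+1)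
        have hev : ∀ᶠ n in (U : Filter ℕ), (v 0 n)[i]? = some (h2.choose i) := by
          filter_upwards [hcof N] with n hn
          have htake := hN n hn
          rw [hu n] at htake
          have : ((v 0 n).take (i+1))[i]? = ((List.range (i+1)).map h2.choose)[i]? := by
            rw [htake]
          rw [List.getElem?_take, if_pos (by omega)] at this
          rw [this]
          simp
        obtain ⟨n, hn1, hn2⟩ := ((hB 0 i).and hev).exists
        rw [← ha]
        show wget (β 0) i = some (h2.choose i)
        rw [← hn1, hn2]
      · rw [dif_neg h2] at ha
        rw [← ha] at hα
        exact absurd hα (by simp [Word.IsProper])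
  exact ⟨β, h0, hprop, hmain⟩
end

section
/- Every directive sequence s = (σ_n)_{n∈ℕ} of substitutions over Σ directs at least one nonempty word β ∈ Σ^+ ∪ Σ^ω. -/
universe u

variable {A : Type u}

section DirectsAux

variable {A : Type u}

theorem Subst.apply_append_s2 (σ : Subst A) : ∀ u v : List A,
    σ.apply (u ++ v) = σ.apply u ++ σ.apply v
  | [], v => rfl
  | a :: t, v => by
    simp [Subst.apply, Subst.apply_append_s2 σ t v]

theorem Subst.apply_prefix (σ : Subst A) {u v : List A} (h : u <+: v) :
    σ.apply u <+: σ.apply v := by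
  obtain ⟨w, rfl⟩ := h
  rw [σ.apply_append_s2]
  exact ⟨_, rfl⟩

theorem Subst.length_le_length_apply (σ : Subst A) : ∀ w : List A,
    w.length ≤ (σ.apply w).length
  | [] => le_refl _
  | a :: t => by
    simp only [Subst.apply, List.length_append, List.length_cons]
    have h1 : 0 < (σ.1 a).length := List.length_pos_iff.mpr (σ.2 a)
    have h2 := σ.length_le_length_apply t
    omega

theorem Subst.length_apply_le (σ : Subst A) {K : ℕ} (hK : ∀ a, (σ.1 a).length ≤ K) :
    ∀ w : List A, (σ.apply w).length ≤ K * w.length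
  | [] => by simp [Subst.apply]
  | a :: t => by
    simp only [Subst.apply, List.length_append, List.length_cons]
    have h1 := hK a
    have h2 := σ.length_apply_le hK t
    rw [Nat.mul_succ]
    omega

theorem Subst.apply_head? (σ : Subst A) (b : A) (t : List A) :
    (σ.apply (b :: t)).head? = (σ.1 b).head? := by
  cases h : σ.1 b with
  | nil => exact absurd h (σ.2 b)
  | cons c r => simp [Subst.apply, h]

/-- `segW s a n k = σ_n σ_{n+1} ⋯ σ_{n+k} [a (n+k+1)]`. -/
def segW (s : ℕ → Subst A) (a : ℕ → A) : ℕ → ℕ → List A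
  | n, 0 => (s n).apply [a (n + 1)]
  | n, k + 1 => (s n).apply (segW s a (n + 1) k)

theorem segW_ne_nil (s : ℕ → Subst A) (a : ℕ → A) : ∀ n k, segW s a n k ≠ []
  | n, 0 => (s n).apply_ne_nil (by simp)
  | n, k + 1 => (s n).apply_ne_nil (segW_ne_nil s a (n + 1) k)

/-- congeniality hypothesis for `a`. -/
def Cong (s : ℕ → Subst A) (a : ℕ → A) : Prop :=
  ∀ n, ∃ t, (s n).1 (a (n + 1)) = a n :: t

theorem segW_prefix_succ {s : ℕ → Subst A} {a : ℕ → A} (hc : Cong s a) :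
    ∀ k n, segW s a n k <+: segW s a n (k + 1)
  | 0, n => by
    show segW s a n 0 <+: (s n).apply (segW s a (n + 1) 0)
    refine (s n).apply_prefix ?_
    show [a (n + 1)] <+: (s (n + 1)).apply [a (n + 2)]
    obtain ⟨t, ht⟩ := hc (n + 1)
    show [a (n + 1)] <+: (s (n + 1)).1 (a (n + 2)) ++ Subst.apply _ []
    rw [ht]
    exact ⟨t ++ Subst.apply _ [], rfl⟩
  | k + 1, n => (s n).apply_prefix (segW_prefix_succ hc k (n + 1))

theorem segW_prefix {s : ℕ → Subst A} {a : ℕ → A} (hc : Cong s a) (n : ℕ) :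
    ∀ {k k'}, k ≤ k' → segW s a n k <+: segW s a n k' := by
  intro k k' h
  induction h with
  | refl => exact List.prefix_refl _
  | step h ih => exact ih.trans (segW_prefix_succ hc _ n)

theorem segW_length_le_zero (s : ℕ → Subst A) (a : ℕ → A) :
    ∀ n k, (segW s a n k).length ≤ (segW s a 0 (n + k)).length := by
  intro n
  induction n with
  | zero => intro k; simp
  | succ n ih =>
    intro k
    have h1 : (segW s a (n + 1) k).length ≤ (segW s a n (k + 1)).length :=
      (s n).length_le_length_apply _
    have h2 := ih (k + 1)
    have : n + (k + 1) = n + 1 + k := by omega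
    rw [this] at h2
    exact h1.trans h2

/-- eventual stabilization of a bounded monotone sequence of naturals -/
theorem mono_bounded_stab (f : ℕ → ℕ) (hm : Monotone f) (L : ℕ) (hb : ∀ k, f k ≤ L) :
    ∃ K, ∀ k, K ≤ k → f k = f K := by
  by_contra h
  push_neg at h
  have h' : ∀ K, ∃ k, f K < f k := by
    intro K
    obtain ⟨k, hk1, hk2⟩ := h K
    exact ⟨k, lt_of_le_of_ne (hm hk1) (Ne.symm hk2)⟩
  have : ∀ j, ∃ k, j ≤ f k := by
    intro j
    induction j with
    | zero => exact ⟨0, Nat.zero_le _⟩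
    | succ j ih =>
      obtain ⟨k, hk⟩ := ih
      obtain ⟨k', hk'⟩ := h' k
      exact ⟨k', by omega⟩
  obtain ⟨k, hk⟩ := this (L + 1)
  exact absurd (hb k) (by omega)

theorem getD_of_prefix {u v : List A} (h : u <+: v) {j : ℕ} (hj : j < u.length) (d : A) :
    v.getD j d = u.getD j d := by
  obtain ⟨w, rfl⟩ := h
  exact List.getD_append u w d j hj

theorem ultra_const {α : Type*} [Fintype A] [Nonempty A] (U : Ultrafilter α) (f : α → A) :
    ∃ b : A, ∀ᶠ m in (U : Filter α), f m = b := by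
  by_contra h
  push_neg at h
  have h2 : ∀ b : A, ∀ᶠ m in (U : Filter α), f m ≠ b := fun b =>
    h b
  have h3 : ∀ᶠ m in (U : Filter α), ∀ b : A, f m ≠ b := Filter.eventually_all.2 h2
  obtain ⟨m, hm⟩ := h3.exists
  exact hm (f m) rfl

end DirectsAux

/-- Every directive sequence directs at least one nonempty word
`β ∈ Σ⁺ ∪ Σ^ω`. -/
theorem directs_something {A : Type u} [Fintype A] [Nonempty A]
    (s : ℕ → Subst A) :
    ∃ β : Word A, β.IsProper ∧ Directs s β := by
  classical
  obtain ⟨x₀⟩ := ‹Nonempty A›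
  -- Step 1: construct a congenial sequence of letters via an ultrafilter.
  obtain ⟨U, hU⟩ := Ultrafilter.exists_le (Filter.atTop : Filter ℕ)
  set c : ℕ → A := fun _ => x₀ with hc
  set g : ℕ → ℕ → A := fun n m => (segW s c n (m - n - 1)).headD x₀ with hg
  choose a ha using fun n => ultra_const U (g n)
  have hcong : Cong s a := by
    intro n
    have hev := (ha n).and ((ha (n + 1)).and
      ((Filter.eventually_ge_atTop (n + 2)).filter_mono hU))
    obtain ⟨m, h1, h2, h3⟩ := hev.exists
    have hk : m - n - 1 = (m - (n + 1) - 1) + 1 := by omega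
    obtain ⟨b, t, hbt⟩ := List.exists_cons_of_ne_nil (segW_ne_nil s c (n + 1) (m - (n + 1) - 1))
    have hb : b = a (n + 1) := by
      have : g (n + 1) m = b := by simp [hg, hbt]
      rw [this] at h2; exact h2
    obtain ⟨p, q, hpq⟩ := List.exists_cons_of_ne_nil ((s n).apply_ne_nil (w := b :: t) (by simp))
    obtain ⟨c0, r, hcr⟩ := List.exists_cons_of_ne_nil ((s n).2 b)
    have hpc : p = c0 := by
      have h5 := (s n).apply_head? b t
      rw [hpq, hcr] at h5
      simpa using h5
    have hgn : g n m = p := by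
      simp only [hg, hk]
      show ((s n).apply (segW s c (n + 1) (m - (n + 1) - 1))).headD x₀ = p
      rw [hbt, hpq]; rfl
    rw [hgn] at h1
    refine ⟨r, ?_⟩
    rw [← hb, hcr, ← hpc, h1]
  -- Step 2: the approximating words `W n k` and the length dichotomy.
  by_cases hbdd : ∃ L, ∀ k, (segW s a 0 k).length ≤ L
  · -- bounded case: the words stabilize to finite words.
    obtain ⟨L, hL⟩ := hbdd
    have hbn : ∀ n k, (segW s a n k).length ≤ L := fun n k =>
      (segW_length_le_zero s a n k).trans (hL _)
    have hmono : ∀ n, Monotone fun k => (segW s a n k).length := fun n =>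
      monotone_nat_of_le_succ fun k => (segW_prefix_succ hcong k n).length_le
    choose K hK using fun n => mono_bounded_stab _ (hmono n) L (hbn n)
    have hstab : ∀ n k, K n ≤ k → segW s a n k = segW s a n (K n) := by
      intro n k hk
      exact ((segW_prefix hcong n hk).eq_of_length (hK n k hk).symm).symm
    have hrel : ∀ n, segW s a n (K n) = (s n).apply (segW s a (n + 1) (K (n + 1))) := by
      intro n
      set k := max (K n) (K (n + 1)) with hkdef
      have e1 := hstab n (k + 1) (le_trans (le_max_left _ _) (Nat.le_succ k))
      have e2 := hstab (n + 1) k (le_max_right _ _)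
      rw [← e1]
      show (s n).apply (segW s a (n + 1) k) = _
      rw [e2]
    refine ⟨Word.fin (segW s a 0 (K 0)), segW_ne_nil s a 0 (K 0),
      fun n => Word.fin (segW s a n (K n)), rfl, fun n => segW_ne_nil s a n (K n),
      fun n => ?_⟩
    show Word.fin (segW s a n (K n)) = Word.fin ((s n).apply (segW s a (n + 1) (K (n + 1))))
    rw [hrel n]
  · -- unbounded case: the words converge to an infinite word.
    push_neg at hbdd
    have hunb : ∀ n L, ∃ k, L < (segW s a n k).length := by
      intro n
      induction n with
      | zero => exact hbdd
      | succ n ih =>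
        intro L
        set Kn := Finset.univ.sup fun b : A => ((s n).1 b).length with hKdef
        have hKb : ∀ b : A, ((s n).1 b).length ≤ Kn := fun b =>
          Finset.le_sup (f := fun b : A => ((s n).1 b).length) (Finset.mem_univ b)
        obtain ⟨k', hk'⟩ := ih (max Kn (Kn * L))
        match k' with
        | 0 =>
          exfalso
          have h0 : (segW s a n 0).length ≤ Kn * 1 := by
            show ((s n).apply [a (n + 1)]).length ≤ Kn * [a (n + 1)].length
            exact (s n).length_apply_le hKb _
          have := le_max_left Kn (Kn * L)
          omega
        | k + 1 =>
          refine ⟨k, ?_⟩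
          have hle : (segW s a n (k + 1)).length ≤ Kn * (segW s a (n + 1) k).length := by
            show ((s n).apply (segW s a (n + 1) k)).length ≤ _
            exact (s n).length_apply_le hKb _
          have hlt : Kn * L < Kn * (segW s a (n + 1) k).length :=
            lt_of_le_of_lt (le_max_right _ _) (lt_of_lt_of_le hk' hle)
          exact Nat.lt_of_mul_lt_mul_left hlt
    choose φ hφ using hunb
    set f : ℕ → ℕ → A := fun n j => (segW s a n (φ n j)).getD j x₀ with hf
    have hag : ∀ n j k, j < (segW s a n k).length → (segW s a n k).getD j x₀ = f n j := by
      intro n j k hj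
      have p1 : segW s a n k <+: segW s a n (max k (φ n j)) :=
        segW_prefix hcong n (le_max_left _ _)
      have p2 : segW s a n (φ n j) <+: segW s a n (max k (φ n j)) :=
        segW_prefix hcong n (le_max_right _ _)
      have e1 := getD_of_prefix p1 hj x₀
      have e2 := getD_of_prefix p2 (hφ n j) x₀
      rw [← e1, e2]
    have htake : ∀ n j k, j + 1 ≤ (segW s a n k).length →
        (List.range (j + 1)).map (f n) = (segW s a n k).take (j + 1) := by
      intro n j k hjk
      apply List.ext_getElem
      · simp [List.length_take]; omega
      · intro i h1 h2
        simp only [List.getElem_map, List.getElem_range, List.getElem_take]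
        have hi : i < (segW s a n k).length := by
          simp at h1; omega
        rw [← hag n i k hi]
        exact List.getD_eq_getElem _ x₀ hi
    have hrel : ∀ n, f n = (s n).applyInf (f (n + 1)) := by
      intro n
      funext j
      obtain ⟨k, hk⟩ : ∃ k, j < (segW s a (n + 1) k).length := ⟨φ (n + 1) j, hφ (n + 1) j⟩
      have ht := htake (n + 1) j k (by omega)
      show f n j = ((s n).apply ((List.range (j + 1)).map (f (n + 1)))).getD j (f (n + 1) 0)
      rw [ht]
      set u := (segW s a (n + 1) k).take (j + 1) with hu
      have hul : u.length = j + 1 := by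
        simp [hu, List.length_take]; omega
      have hpre : (s n).apply u <+: segW s a n (k + 1) := by
        show (s n).apply u <+: (s n).apply (segW s a (n + 1) k)
        exact (s n).apply_prefix (List.take_prefix _ _)
      have hlen : j < ((s n).apply u).length := by
        have := (s n).length_le_length_apply u
        omega
      have hlen2 : j < (segW s a n (k + 1)).length := lt_of_lt_of_le hlen hpre.length_le
      rw [List.getD_eq_getElem _ (f (n + 1) 0) hlen, ← List.getD_eq_getElem _ x₀ hlen,
        ← getD_of_prefix hpre hlen x₀, hag n j (k + 1) hlen2]
    refine ⟨Word.inf (f 0), trivial, fun n => Word.inf (f n), rfl, fun n => trivial,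
      fun n => ?_⟩
    show Word.inf (f n) = Word.inf ((s n).applyInf (f (n + 1)))
    rw [hrel n]
end

section
/- Let s = (σ_n)_{n∈ℕ} be a directive sequence of substitutions over Σ. Then there are at most |Σ| sequences of letters (a_n)_{n∈ℕ} such that (σ_n, a_n)_{n∈ℕ} is congenial; consequently the set congenials_s of s-congenial words has cardinality at most |Σ|. (In particular, if two congenial augmentations (σ_n, a_n)_{n∈ℕ} and (σ_n, a'_n)_{n∈ℕ} of s satisfy a_n = a'_n for infinitely many n, then a_n = a'_n for all n.) -/
universe u

variable {A : Type u}

/-- For a directive sequence `s` there are at most `|Σ|` congenial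
augmentations of `s`, hence at most `|Σ|` `s`-congenial words; moreover two congenial
augmentations agreeing infinitely often are equal. -/
theorem congenials_at_most_card {A : Type u} [Fintype A] [Nonempty A]
    (s : ℕ → Subst A) :
    {a : ℕ → A | Congenial s a}.Finite ∧
    {a : ℕ → A | Congenial s a}.ncard ≤ Fintype.card A ∧
    {α : Word A | SCongenial s α}.Finite ∧
    {α : Word A | SCongenial s α}.ncard ≤ Fintype.card A ∧
    (∀ a a' : ℕ → A, Congenial s a → Congenial s a' →
      (∀ N, ∃ n, N ≤ n ∧ a n = a' n) → a = a') := by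
  classical
  -- downward determination
  have agree : ∀ (a a' : ℕ → A), Congenial s a → Congenial s a' →
      ∀ n, a n = a' n → ∀ m, m ≤ n → a m = a' m := by
    intro a a' ha ha' n
    induction n with
    | zero =>
      intro h m hm
      interval_cases m
      exact h
    | succ n ih =>
      intro h m hm
      have hn : a n = a' n := by
        have h1 := ha n
        have h2 := ha' n
        rw [h] at h1
        exact Option.some_inj.mp (h1.symm.trans h2)
      rcases hm.lt_or_eq with hlt | rfl
      · exact ih hn m (Nat.lt_succ_iff.mp hlt)
      · exact h
  have eq_of_inf : ∀ a a' : ℕ → A, Congenial s a → Congenial s a' →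
      (∀ N, ∃ n, N ≤ n ∧ a n = a' n) → a = a' := by
    intro a a' ha ha' h
    funext m
    obtain ⟨n, hmn, hn⟩ := h m
    exact agree a a' ha ha' n hn m hmn
  -- any finite subset of the congenial set has card ≤ |A|
  have card_le : ∀ T : Finset (ℕ → A), (↑T ⊆ {a : ℕ → A | Congenial s a}) →
      T.card ≤ Fintype.card A := by
    intro T hT
    set f : (ℕ → A) × (ℕ → A) → ℕ := fun p =>
      if h : ∃ N, ∀ n, N ≤ n → p.1 n ≠ p.2 n then h.choose else 0 with hf
    set N := (T ×ˢ T).sup f with hN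
    have hinj : Set.InjOn (fun a : ℕ → A => a N) ↑T := by
      intro a haT a' ha'T hval
      by_contra hne
      have hex : ∃ M, ∀ n, M ≤ n → a n ≠ a' n := by
        by_contra hc
        push_neg at hc
        exact hne (eq_of_inf a a' (hT haT) (hT ha'T) hc)
      have hmem : (a, a') ∈ T ×ˢ T := Finset.mem_product.mpr ⟨haT, ha'T⟩
      have hle : f (a, a') ≤ N := Finset.le_sup hmem
      have hfe : f (a, a') = hex.choose := by simp [hf, dif_pos hex]
      rw [hfe] at hle
      exact hex.choose_spec N hle hval
    have := Finset.card_le_card_of_injOn (fun a : ℕ → A => a N)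
      (fun a _ => Finset.mem_univ _) hinj
    simpa using this
  have hfin : {a : ℕ → A | Congenial s a}.Finite := by
    by_contra hinf
    obtain ⟨T, hTsub, hTcard⟩ :=
      Set.Infinite.exists_subset_card_eq hinf (Fintype.card A + 1)
    have := card_le T hTsub
    omega
  have hncard : {a : ℕ → A | Congenial s a}.ncard ≤ Fintype.card A := by
    rw [Set.ncard_eq_toFinset_card _ hfin]
    exact card_le _ (by simp)
  have hsub : {α : Word A | SCongenial s α} ⊆ genWord s '' {a : ℕ → A | Congenial s a} := by
    rintro α ⟨-, a, ha, hgen⟩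
    exact ⟨a, ha, hgen⟩
  have hfin2 : {α : Word A | SCongenial s α}.Finite := (hfin.image (genWord s)).subset hsub
  refine ⟨hfin, hncard, hfin2, ?_, fun a a' ha ha' h => eq_of_inf a a' ha ha' h⟩
  calc {α : Word A | SCongenial s α}.ncard
      ≤ (genWord s '' {a : ℕ → A | Congenial s a}).ncard :=
        Set.ncard_le_ncard hsub (hfin.image _)
    _ ≤ {a : ℕ → A | Congenial s a}.ncard := Set.ncard_image_le hfin
    _ ≤ Fintype.card A := hncard
end

section
/- Let M be a finite monoid and let σ, σ', μ, μ' be substitutions over Σ. If σ ≡_M σ' and μ ≡_M μ', then σ∘μ ≡_M σ'∘μ'. Consequently the set Ξ_M of ≡_M-equivalence classes of substitutions is a monoid under the operation [σ]·[μ] = [σ∘μ], with identity element the class of the identity substitution. -/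
universe u

variable {A : Type u}

set_option linter.unusedSectionVars false

namespace Seg12

variable {A : Type u} {M : Type*} [DecidableEq A] [Monoid M]

/-- Multiply the last component of the last pair by `m`. -/
def mulLast : List (A × M) → M → List (A × M)
  | [], _ => []
  | [p], m => [(p.1, p.2 * m)]
  | p :: q :: t, m => p :: mulLast (q :: t) m

def prodf (f : A → M) (l : List A) : M := (l.map f).prod

def segStep (f : A → M) (st : List (A × M)) (p : A × M) : List (A × M) :=
  if p.1 ∈ st.map Prod.fst then mulLast st (f p.1 * p.2) else st ++ [p]

def segFold (f : A → M) (st : List (A × M)) (L : List (A × M)) : List (A × M) :=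
  L.foldl (segStep f) st

def stepL (f : A → M) (st : List (A × M)) (x : A) : List (A × M) := segStep f st (x, 1)

def wordFold (f : A → M) (st : List (A × M)) (u : List A) : List (A × M) :=
  u.foldl (stepL f) st

def msegs (f : A → M) : List A → List (A × M)
  | [] => []
  | x :: t => wordFold f [(x, 1)] t

def prodSegs (f : A → M) (L : List (A × M)) : M := (L.map fun p => f p.1 * p.2).prod

theorem mulLast_map_fst : ∀ (l : List (A × M)) (m : M),
    (mulLast l m).map Prod.fst = l.map Prod.fst
  | [], _ => rfl
  | [_], _ => rfl
  | p :: q :: t, m => by simp [mulLast, mulLast_map_fst (q :: t) m]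

theorem mulLast_concat : ∀ (l : List (A × M)) (p : A × M) (m : M),
    mulLast (l ++ [p]) m = l ++ [(p.1, p.2 * m)]
  | [], _, _ => rfl
  | [q], p, m => rfl
  | q :: r :: t, p, m => congrArg (List.cons q) (mulLast_concat (r :: t) p m)

theorem mulLast_mulLast (l : List (A × M)) (a b : M) :
    mulLast (mulLast l a) b = mulLast l (a * b) := by
  rcases List.eq_nil_or_concat l with rfl | ⟨l', q, rfl⟩
  · rfl
  · rw [List.concat_eq_append, mulLast_concat, mulLast_concat, mulLast_concat, mul_assoc]

theorem mulLast_one (l : List (A × M)) : mulLast l 1 = l := by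
  rcases List.eq_nil_or_concat l with rfl | ⟨l', q, rfl⟩
  · rfl
  · rw [List.concat_eq_append, mulLast_concat, mul_one]

theorem mulLast_ne_nil {l : List (A × M)} (h : l ≠ []) (m : M) : mulLast l m ≠ [] := by
  match l with
  | [] => exact absurd rfl h
  | [_] => simp [mulLast]
  | p :: q :: t => simp [mulLast]

theorem segStep_ne_nil (f : A → M) (st : List (A × M)) (p : A × M) : segStep f st p ≠ [] := by
  unfold segStep
  split
  · rename_i hmem
    have hst : st ≠ [] := by rintro rfl; simp at hmem
    exact mulLast_ne_nil hst _
  · simp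

theorem map_fst_segStep (f : A → M) (st : List (A × M)) (p : A × M) (y : A) :
    y ∈ (segStep f st p).map Prod.fst ↔ y ∈ st.map Prod.fst ∨ y = p.1 := by
  unfold segStep
  split
  · rename_i hmem
    rw [mulLast_map_fst]
    constructor
    · exact Or.inl
    · rintro (hy | rfl)
      · exact hy
      · exact hmem
  · simp

theorem segFold_cons (f : A → M) (st : List (A × M)) (p : A × M) (L : List (A × M)) :
    segFold f st (p :: L) = segFold f (segStep f st p) L := rfl

theorem segFold_append (f : A → M) (st : List (A × M)) (L₁ L₂ : List (A × M)) :
    segFold f st (L₁ ++ L₂) = segFold f (segFold f st L₁) L₂ := List.foldl_append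

theorem segFold_ne_nil {st : List (A × M)} (f : A → M) (h : st ≠ []) (L : List (A × M)) :
    segFold f st L ≠ [] := by
  induction L generalizing st with
  | nil => exact h
  | cons p L ih => exact ih (segStep_ne_nil f st p)

theorem mem_map_fst_segFold (f : A → M) {st : List (A × M)} {y : A}
    (h : y ∈ st.map Prod.fst) (L : List (A × M)) :
    y ∈ (segFold f st L).map Prod.fst := by
  induction L generalizing st with
  | nil => exact h
  | cons p L ih => exact ih ((map_fst_segStep f st p y).2 (Or.inl h))

theorem mem_map_fst_segFold_of_mem (f : A → M) (st : List (A × M)) {p : A × M}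
    {L : List (A × M)} (h : p ∈ L) : p.1 ∈ (segFold f st L).map Prod.fst := by
  induction L generalizing st with
  | nil => cases h
  | cons q L ih =>
    rcases List.mem_cons.1 h with rfl | h
    · exact mem_map_fst_segFold f ((map_fst_segStep f st p p.1).2 (Or.inr rfl)) L
    · exact ih _ h

theorem segStep_snd_mul (f : A → M) (st : List (A × M)) (b : A) (m m' : M) :
    segStep f st (b, m * m') = mulLast (segStep f st (b, m)) m' := by
  by_cases hb : b ∈ st.map Prod.fst <;>
    simp [segStep, hb, mulLast_mulLast, mul_assoc, mulLast_concat]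

theorem segFold_mulLast (f : A → M) (st : List (A × M)) {L : List (A × M)} (hL : L ≠ [])
    (m : M) : segFold f st (mulLast L m) = mulLast (segFold f st L) m := by
  rcases List.eq_nil_or_concat L with rfl | ⟨L', q, rfl⟩
  · exact absurd rfl hL
  · rw [List.concat_eq_append, mulLast_concat, segFold_append, segFold_append]
    show segStep f (segFold f st L') (q.1, q.2 * m) = mulLast (segStep f (segFold f st L') q) m
    rw [segStep_snd_mul]

theorem segStep_segFold (f : A → M) (st : List (A × M)) {L : List (A × M)} (hL : L ≠ [])
    (p : A × M) : segStep f (segFold f st L) p = segFold f st (segStep f L p) := by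
  by_cases hp : p.1 ∈ L.map Prod.fst
  · have h1 : p.1 ∈ (segFold f st L).map Prod.fst := by
      rcases List.mem_map.1 hp with ⟨q, hq, hq1⟩
      rw [← hq1]
      exact mem_map_fst_segFold_of_mem f st hq
    rw [show segStep f L p = mulLast L (f p.1 * p.2) from if_pos hp,
      segFold_mulLast f st hL, show segStep f (segFold f st L) p
        = mulLast (segFold f st L) (f p.1 * p.2) from if_pos h1]
  · rw [show segStep f L p = L ++ [p] from if_neg hp, segFold_append]
    rfl

theorem wordFold_append (f : A → M) (st : List (A × M)) (u v : List A) :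
    wordFold f st (u ++ v) = wordFold f (wordFold f st u) v := List.foldl_append

theorem wordFold_segFold (f : A → M) (st : List (A × M)) :
    ∀ (t : List A) {L : List (A × M)}, L ≠ [] →
      wordFold f (segFold f st L) t = segFold f st (wordFold f L t) := by
  intro t
  induction t with
  | nil => intro L _; rfl
  | cons x t ih =>
    intro L hL
    show wordFold f (stepL f (segFold f st L) x) t = segFold f st (wordFold f (stepL f L x) t)
    rw [show stepL f (segFold f st L) x = segFold f st (stepL f L x) from
      segStep_segFold f st hL (x, 1)]
    exact ih (segStep_ne_nil f L (x, 1))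

theorem wordFold_nil_state (f : A → M) : ∀ u : List A, wordFold f [] u = msegs f u
  | [] => rfl
  | x :: t => by
    show wordFold f (stepL f [] x) t = wordFold f [(x, 1)] t
    simp [stepL, segStep]

theorem msegs_spec (f : A → M) (st : List (A × M)) :
    ∀ u : List A, wordFold f st u = segFold f st (msegs f u)
  | [] => rfl
  | x :: t => by
    show wordFold f (stepL f st x) t = segFold f st (wordFold f [(x, 1)] t)
    have h1 : stepL f st x = segFold f st [(x, 1)] := rfl
    rw [h1, wordFold_segFold f st t (by simp)]

theorem prodf_nil (f : A → M) : prodf f ([] : List A) = 1 := rfl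

theorem prodf_cons (f : A → M) (x : A) (t : List A) :
    prodf f (x :: t) = f x * prodf f t := by simp [prodf]

theorem prodf_append (f : A → M) (u v : List A) :
    prodf f (u ++ v) = prodf f u * prodf f v := by simp [prodf]

theorem prodSegs_cons (f : A → M) (p : A × M) (L : List (A × M)) :
    prodSegs f (p :: L) = (f p.1 * p.2) * prodSegs f L := by simp [prodSegs]

theorem prodSegs_mulLast (f : A → M) : ∀ (l : List (A × M)), l ≠ [] → ∀ m : M,
    prodSegs f (mulLast l m) = prodSegs f l * m
  | [], h, _ => absurd rfl h
  | [p], _, m => by simp [prodSegs, mulLast, mul_assoc]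
  | p :: q :: t, _, m => by
    have := prodSegs_mulLast f (q :: t) (by simp) m
    simp only [mulLast, prodSegs_cons, this, mul_assoc]

theorem prodSegs_segStep (f : A → M) (st : List (A × M)) (p : A × M) :
    prodSegs f (segStep f st p) = prodSegs f st * (f p.1 * p.2) := by
  by_cases hp : p.1 ∈ st.map Prod.fst
  · have hst : st ≠ [] := by rintro rfl; simp at hp
    rw [show segStep f st p = mulLast st (f p.1 * p.2) from if_pos hp,
      prodSegs_mulLast f st hst]
  · rw [show segStep f st p = st ++ [p] from if_neg hp]
    simp [prodSegs]

theorem prodSegs_wordFold (f : A → M) (st : List (A × M)) :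
    ∀ u : List A, prodSegs f (wordFold f st u) = prodSegs f st * prodf f u := by
  intro u
  induction u generalizing st with
  | nil => simp [wordFold, prodf_nil]
  | cons x t ih =>
    show prodSegs f (wordFold f (stepL f st x) t) = _
    rw [ih, show stepL f st x = segStep f st (x, 1) from rfl, prodSegs_segStep,
      prodf_cons, mul_one, mul_assoc]

theorem prodf_eq_prodSegs (f : A → M) : ∀ u : List A, prodf f u = prodSegs f (msegs f u)
  | [] => rfl
  | x :: t => by
    show prodf f (x :: t) = prodSegs f (wordFold f [(x, 1)] t)
    rw [prodSegs_wordFold, prodf_cons]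
    simp [prodSegs]

theorem segFold_all_mem (f : A → M) : ∀ (L : List (A × M)) (st : List (A × M)),
    (∀ p ∈ L, p.1 ∈ st.map Prod.fst) → segFold f st L = mulLast st (prodSegs f L)
  | [], st, _ => by simp [segFold, prodSegs, mulLast_one]
  | p :: L, st, h => by
    have hp : p.1 ∈ st.map Prod.fst := h p List.mem_cons_self
    rw [segFold_cons, show segStep f st p = mulLast st (f p.1 * p.2) from if_pos hp,
      segFold_all_mem f L _ (fun q hq => by rw [mulLast_map_fst]; exact h q (List.mem_cons_of_mem _ hq)),
      mulLast_mulLast, prodSegs_cons]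

theorem mem_map_fst_wordFold (f : A → M) (y : A) :
    ∀ (u : List A) (st : List (A × M)),
      (y ∈ (wordFold f st u).map Prod.fst ↔ y ∈ st.map Prod.fst ∨ y ∈ u)
  | [], st => by simp [wordFold]
  | x :: t, st => by
    show y ∈ (wordFold f (stepL f st x) t).map Prod.fst ↔ _
    rw [mem_map_fst_wordFold f y t, show stepL f st x = segStep f st (x, 1) from rfl,
      map_fst_segStep]
    simp only [List.mem_cons]
    tauto

theorem mem_map_fst_msegs (f : A → M) (y : A) :
    ∀ u : List A, (y ∈ (msegs f u).map Prod.fst ↔ y ∈ u)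
  | [] => by simp [msegs]
  | x :: t => by
    show y ∈ (wordFold f [(x, 1)] t).map Prod.fst ↔ _
    rw [mem_map_fst_wordFold]
    simp only [List.map_cons, List.map_nil, List.mem_singleton, List.mem_cons]
    tauto

def blockStep (σ : Subst A) (f : A → M) (st : List (A × M)) (p : A × M) : List (A × M) :=
  mulLast (segFold f st (msegs f (σ.1 p.1))) p.2

def blockFold (σ : Subst A) (f : A → M) (st : List (A × M)) (L : List (A × M)) :
    List (A × M) :=
  L.foldl (blockStep σ f) st

theorem blockFold_append (σ : Subst A) (f : A → M) (st : List (A × M))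
    (L₁ L₂ : List (A × M)) :
    blockFold σ f st (L₁ ++ L₂) = blockFold σ f (blockFold σ f st L₁) L₂ :=
  List.foldl_append

theorem blockFold_mulLast (σ : Subst A) (f : A → M) (st : List (A × M))
    {T : List (A × M)} (hT : T ≠ []) (m : M) :
    blockFold σ f st (mulLast T m) = mulLast (blockFold σ f st T) m := by
  rcases List.eq_nil_or_concat T with rfl | ⟨T', q, rfl⟩
  · exact absurd rfl hT
  · rw [List.concat_eq_append, mulLast_concat, blockFold_append, blockFold_append]
    show blockStep σ f (blockFold σ f st T') (q.1, q.2 * m)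
      = mulLast (blockStep σ f (blockFold σ f st T') q) m
    unfold blockStep
    rw [mulLast_mulLast]

/-- The key simulation lemma. -/
theorem wordFold_apply (σ : Subst A) (f g : A → M) (hg : ∀ c, g c = prodf f (σ.1 c)) :
    ∀ (w : List A) (T : List (A × M)),
      (∀ c ∈ T.map Prod.fst, ∀ y ∈ σ.1 c, y ∈ (blockFold σ f [] T).map Prod.fst) →
      wordFold f (blockFold σ f [] T) (σ.apply w) = blockFold σ f [] (wordFold g T w) := by
  intro w
  induction w with
  | nil => intro T _; rfl
  | cons x w' ih =>
    intro T hInv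
    set S := blockFold σ f [] T with hS
    have happ : σ.apply (x :: w') = σ.1 x ++ σ.apply w' := rfl
    have key : segFold f S (msegs f (σ.1 x)) = blockFold σ f [] (stepL g T x) := by
      by_cases hx : x ∈ T.map Prod.fst
      · have hT : T ≠ [] := by rintro rfl; simp at hx
        have hall : ∀ p ∈ msegs f (σ.1 x), p.1 ∈ S.map Prod.fst := by
          intro p hp
          have h1 : p.1 ∈ (msegs f (σ.1 x)).map Prod.fst := List.mem_map_of_mem hp
          exact hInv x hx p.1 ((mem_map_fst_msegs f p.1 (σ.1 x)).1 h1)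
        rw [show stepL g T x = mulLast T (g x * 1) from if_pos hx,
          blockFold_mulLast σ f [] hT, segFold_all_mem f _ _ hall,
          ← prodf_eq_prodSegs, ← hg x, mul_one, ← hS]
      · rw [show stepL g T x = T ++ [(x, 1)] from if_neg hx, blockFold_append]
        show _ = blockStep σ f (blockFold σ f [] T) (x, 1)
        unfold blockStep
        rw [mulLast_one, ← hS]
    have hInv' : ∀ c ∈ (stepL g T x).map Prod.fst, ∀ y ∈ σ.1 c,
        y ∈ (blockFold σ f [] (stepL g T x)).map Prod.fst := by
      intro c hc y hy
      rw [← key]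
      rcases (map_fst_segStep g T (x, 1) c).1 hc with hc' | rfl
      · exact mem_map_fst_segFold f (hInv c hc' y hy) _
      · have h1 : y ∈ (msegs f (σ.1 c)).map Prod.fst := (mem_map_fst_msegs f y _).2 hy
        rcases List.mem_map.1 h1 with ⟨p, hp, rfl⟩
        exact mem_map_fst_segFold_of_mem f S hp
    calc wordFold f S (σ.apply (x :: w'))
        = wordFold f (segFold f S (msegs f (σ.1 x))) (σ.apply w') := by
          rw [happ, wordFold_append, msegs_spec f S (σ.1 x)]
      _ = wordFold f (blockFold σ f [] (stepL g T x)) (σ.apply w') := by rw [key]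
      _ = blockFold σ f [] (wordFold g (stepL g T x) w') := ih _ hInv'
      _ = blockFold σ f [] (wordFold g T (x :: w')) := rfl

theorem msegs_apply (σ : Subst A) (f g : A → M) (hg : ∀ c, g c = prodf f (σ.1 c)) :
    ∀ w : List A, msegs f (σ.apply w) = blockFold σ f [] (msegs g w)
  | [] => rfl
  | c :: t => by
    have hb : blockFold σ f [] [(c, 1)] = msegs f (σ.1 c) := by
      show blockStep σ f [] (c, 1) = _
      unfold blockStep
      rw [mulLast_one, ← msegs_spec, wordFold_nil_state]
    have h1 : msegs f (σ.apply (c :: t))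
        = wordFold f (msegs f (σ.1 c)) (σ.apply t) := by
      rw [← wordFold_nil_state, show σ.apply (c :: t) = σ.1 c ++ σ.apply t from rfl,
        wordFold_append, wordFold_nil_state]
    have hInv : ∀ c' ∈ ([(c, (1 : M))]).map Prod.fst, ∀ y ∈ σ.1 c',
        y ∈ (blockFold σ f [] [(c, 1)]).map Prod.fst := by
      intro c' hc' y hy
      have : c' = c := by simpa using hc'
      subst this
      rw [hb]
      exact (mem_map_fst_msegs f y _).2 hy
    rw [h1, ← hb, wordFold_apply σ f g hg t [(c, 1)] hInv]
    rfl

theorem blockFold_congr {σ σ' : Subst A} {f : A → M}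
    (h : ∀ c, msegs f (σ.1 c) = msegs f (σ'.1 c)) (st : List (A × M)) (L : List (A × M)) :
    blockFold σ f st L = blockFold σ' f st L := by
  have hstep : blockStep σ f = blockStep σ' f := by
    funext st p
    unfold blockStep
    rw [h]
  unfold blockFold
  rw [hstep]

theorem hom_ofList (h : FreeMonoid A →* M) :
    ∀ l : List A, h (FreeMonoid.ofList l) = prodf (fun x => h (FreeMonoid.of x)) l
  | [] => by
    show h 1 = _
    rw [map_one]; rfl
  | a :: t => by
    rw [show FreeMonoid.ofList (a :: t) = FreeMonoid.of a * FreeMonoid.ofList t from rfl,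
      map_mul, hom_ofList h t, prodf_cons]

theorem segsAux_msegs (f : A → M) :
    ∀ (t : List A) (st : List (A × M)) (b : A) (cur seen : List A),
      (∀ x, x ∈ seen ↔ x = b ∨ x ∈ st.map Prod.fst) →
      wordFold f (st ++ [(b, prodf f cur.reverse)]) t
        = st ++ (segsAux t seen b cur).map (fun p => (p.1, prodf f p.2)) := by
  intro t
  induction t with
  | nil => intro st b cur seen _; simp [wordFold, segsAux]
  | cons x t' ih =>
    intro st b cur seen hseen
    have hmem : x ∈ ((st ++ [(b, prodf f cur.reverse)]).map Prod.fst) ↔ x ∈ seen := by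
      rw [hseen x]
      simp only [List.map_append, List.map_cons, List.map_nil, List.mem_append,
        List.mem_singleton]
      tauto
    by_cases hx : x ∈ seen
    · rw [show segsAux (x :: t') seen b cur = segsAux t' seen b (x :: cur) by
        simp [segsAux, hx]]
      show wordFold f (stepL f (st ++ [(b, prodf f cur.reverse)]) x) t' = _
      rw [show stepL f (st ++ [(b, prodf f cur.reverse)]) x
          = mulLast (st ++ [(b, prodf f cur.reverse)]) (f x * 1) from
            if_pos (hmem.2 hx),
        mulLast_concat]
      have : prodf f cur.reverse * (f x * 1) = prodf f (x :: cur).reverse := by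
        rw [List.reverse_cons, prodf_append, mul_one]
        simp [prodf]
      rw [this]
      exact ih st b (x :: cur) seen hseen
    · rw [show segsAux (x :: t') seen b cur
          = (b, cur.reverse) :: segsAux t' (x :: seen) x [] by simp [segsAux, hx]]
      show wordFold f (stepL f (st ++ [(b, prodf f cur.reverse)]) x) t' = _
      rw [show stepL f (st ++ [(b, prodf f cur.reverse)]) x
          = (st ++ [(b, prodf f cur.reverse)]) ++ [(x, 1)] from
            if_neg (fun hc => hx (hmem.1 hc))]
      have h1 : (1 : M) = prodf f (List.reverse []) := rfl
      rw [h1, ih (st ++ [(b, prodf f cur.reverse)]) x [] (x :: seen) ?_]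
      · simp
      · intro y
        simp only [List.mem_cons, hseen y, List.map_append, List.map_cons, List.map_nil,
          List.mem_append, List.mem_singleton]
        tauto

theorem segs_msegs (f : A → M) :
    ∀ u : List A, (segs u).map (fun p => (p.1, prodf f p.2)) = msegs f u
  | [] => rfl
  | x :: t => by
    have := segsAux_msegs f t [] x [] [x] (by simp)
    simp only [List.nil_append] at this
    rw [show segs (x :: t) = segsAux t [x] x [] from rfl, ← this]
    rfl

theorem msegs_of_segEquiv {σ τ : Subst A} (hst : SegEquiv M σ τ) (q : A → M) (a : A) :
    msegs q (σ.1 a) = msegs q (τ.1 a) := by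
  have h := hst a (FreeMonoid.lift q)
  have hfun : (fun p : A × List A => (p.1, (FreeMonoid.lift q) (FreeMonoid.ofList p.2)))
      = fun p : A × List A => (p.1, prodf q p.2) := by
    funext p
    rw [hom_ofList]
    have : (fun x => (FreeMonoid.lift q) (FreeMonoid.of x)) = q := by
      funext x; simp
    rw [this]
  rw [hfun] at h
  rw [← segs_msegs q, ← segs_msegs q, h]

theorem apply_append (σ : Subst A) : ∀ u v : List A,
    σ.apply (u ++ v) = σ.apply u ++ σ.apply v
  | [], v => rfl
  | a :: t, v => by
    show σ.1 a ++ σ.apply (t ++ v) = (σ.1 a ++ σ.apply t) ++ σ.apply v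
    rw [apply_append σ t v, List.append_assoc]

theorem comp_apply (σ μ : Subst A) : ∀ w : List A,
    (σ.comp μ).apply w = σ.apply (μ.apply w)
  | [] => rfl
  | a :: t => by
    show σ.apply (μ.1 a) ++ (σ.comp μ).apply t = σ.apply (μ.1 a ++ μ.apply t)
    rw [comp_apply σ μ t, apply_append]

theorem idS_apply : ∀ w : List A, (Subst.idS A).apply w = w
  | [] => rfl
  | a :: t => by
    show [a] ++ (Subst.idS A).apply t = a :: t
    rw [idS_apply t]
    rfl

end Seg12


/-- `≡_M` is a congruence for composition of substitutions; consequently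
the quotient `Ξ_M` is a monoid under `[σ]·[μ] = [σ∘μ]` with identity the class of the
identity substitution (composition is associative, and the identity substitution is a
two-sided identity up to `≡_M`). -/
theorem segEquiv_congruence {A : Type u} [Fintype A] [Nonempty A] [DecidableEq A]
    (M : Type*) [Monoid M] [Finite M] (σ σ' μ μ' : Subst A)
    (hσ : SegEquiv M σ σ') (hμ : SegEquiv M μ μ') :
    SegEquiv M (σ.comp μ) (σ'.comp μ') ∧
    (∀ ρ₁ ρ₂ ρ₃ : Subst A, (ρ₁.comp ρ₂).comp ρ₃ = ρ₁.comp (ρ₂.comp ρ₃)) ∧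
    (∀ ρ : Subst A, SegEquiv M (ρ.comp (Subst.idS A)) ρ ∧
      SegEquiv M ((Subst.idS A).comp ρ) ρ) := by
  classical
  refine ⟨?_, ?_, ?_⟩
  · intro a h
    set f : A → M := fun x => h (FreeMonoid.of x) with hf
    have hfun : (fun p : A × List A => (p.1, h (FreeMonoid.ofList p.2)))
        = fun p : A × List A => (p.1, Seg12.prodf f p.2) := by
      funext p
      rw [Seg12.hom_ofList]
    rw [hfun, Seg12.segs_msegs f, Seg12.segs_msegs f]
    show Seg12.msegs f (σ.apply (μ.1 a)) = Seg12.msegs f (σ'.apply (μ'.1 a))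
    set g : A → M := fun c => Seg12.prodf f (σ.1 c) with hgdef
    have hσm := Seg12.msegs_of_segEquiv hσ f
    have hg' : ∀ c, g c = Seg12.prodf f (σ'.1 c) := by
      intro c
      rw [hgdef]
      show Seg12.prodf f (σ.1 c) = _
      rw [Seg12.prodf_eq_prodSegs, Seg12.prodf_eq_prodSegs, hσm c]
    calc Seg12.msegs f (σ.apply (μ.1 a))
        = Seg12.blockFold σ f [] (Seg12.msegs g (μ.1 a)) :=
          Seg12.msegs_apply σ f g (fun _ => rfl) _
      _ = Seg12.blockFold σ' f [] (Seg12.msegs g (μ.1 a)) :=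
          Seg12.blockFold_congr hσm _ _
      _ = Seg12.blockFold σ' f [] (Seg12.msegs g (μ'.1 a)) := by
          rw [Seg12.msegs_of_segEquiv hμ g a]
      _ = Seg12.msegs f (σ'.apply (μ'.1 a)) :=
          (Seg12.msegs_apply σ' f g hg' _).symm
  · intro ρ₁ ρ₂ ρ₃
    apply Subtype.ext
    funext a
    exact Seg12.comp_apply ρ₁ ρ₂ (ρ₃.1 a)
  · intro ρ
    have h1 : ρ.comp (Subst.idS A) = ρ := by
      apply Subtype.ext
      funext a
      show ρ.apply [a] = ρ.1 a
      show ρ.1 a ++ ρ.apply [] = ρ.1 a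
      simp [Subst.apply]
    have h2 : (Subst.idS A).comp ρ = ρ := by
      apply Subtype.ext
      funext a
      exact Seg12.idS_apply (ρ.1 a)
    rw [h1, h2]
    exact ⟨fun _ _ => rfl, fun _ _ => rfl⟩
end

section
/- (Terminal letters) Let σ be a substitution over Σ and a ∈ Σ a letter. If σ^ω(a) = u for some finite word u ∈ Σ^+, then σ^n(a) = u for all n ≥ |Σ|. -/
universe u

variable {A : Type u}

section TLaux

variable {A : Type u}

theorem TL.mem_apply {σ : Subst A} {c : A} {w : List A} :
    c ∈ σ.apply w ↔ ∃ b ∈ w, c ∈ σ.1 b := by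
  induction w with
  | nil => simp [Subst.apply]
  | cons a t ih => simp [Subst.apply, ih]

theorem TL.length_le_apply (σ : Subst A) (w : List A) :
    w.length ≤ (σ.apply w).length := by
  induction w with
  | nil => simp [Subst.apply]
  | cons a t ih =>
    have h1 : 1 ≤ (σ.1 a).length := List.length_pos_iff.mpr (σ.2 a)
    simp only [Subst.apply, List.length_append, List.length_cons]
    omega

theorem TL.apply_eq_self {σ : Subst A} : ∀ (w : List A), σ.apply w = w →
    ∀ b ∈ w, σ.1 b = [b]
  | [], _, b, hb => absurd hb List.not_mem_nil
  | a :: t, hw, b, hb => by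
    simp only [Subst.apply] at hw
    have hlen := congrArg List.length hw
    simp only [List.length_append, List.length_cons] at hlen
    have h1 : 1 ≤ (σ.1 a).length := List.length_pos_iff.mpr (σ.2 a)
    have h2 := TL.length_le_apply σ t
    have hlen1 : (σ.1 a).length = 1 := by omega
    obtain ⟨x, hx⟩ := List.length_eq_one_iff.mp hlen1
    rw [hx, List.singleton_append] at hw
    obtain ⟨hxa, ht⟩ := List.cons.inj hw
    rcases List.mem_cons.mp hb with hb | hb
    · rw [hb, hx, hxa]
    · exact TL.apply_eq_self t ht b hb

theorem TL.iter_add (σ : Subst A) (m k : ℕ) (w : List A) :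
    σ.iter (m + k) w = σ.iter k (σ.iter m w) := by
  induction k with
  | zero => rfl
  | succ k ih =>
    show σ.apply (σ.iter (m + k) w) = σ.apply (σ.iter k (σ.iter m w))
    rw [ih]

theorem TL.mem_iter {σ : Subst A} : ∀ {k : ℕ} {w : List A} {c : A},
    c ∈ σ.iter k w ↔ ∃ b ∈ w, c ∈ σ.iter k [b] := by
  intro k
  induction k with
  | zero => intro w c; simp [Subst.iter]
  | succ k ih =>
    intro w c
    show c ∈ σ.apply (σ.iter k w) ↔ ∃ b ∈ w, c ∈ σ.apply (σ.iter k [b])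
    simp only [TL.mem_apply]
    constructor
    · rintro ⟨d, hd, hcd⟩
      obtain ⟨b, hb, hd'⟩ := ih.mp hd
      exact ⟨b, hb, d, hd', hcd⟩
    · rintro ⟨b, hb, d, hd, hcd⟩
      exact ⟨d, ih.mpr ⟨b, hb, hd⟩, hcd⟩

theorem TL.mem_iter_trans {σ : Subst A} {a b c : A} {m k : ℕ}
    (h1 : b ∈ σ.iter m [a]) (h2 : c ∈ σ.iter k [b]) : c ∈ σ.iter (m + k) [a] := by
  rw [TL.iter_add]
  exact TL.mem_iter.mpr ⟨b, h1, h2⟩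

theorem TL.exists_chain {σ : Subst A} {a : A} : ∀ {n : ℕ} {c : A}, c ∈ σ.iter n [a] →
    ∃ f : ℕ → A, f 0 = a ∧ f n = c ∧ ∀ i < n, f (i + 1) ∈ σ.1 (f i) := by
  intro n
  induction n with
  | zero =>
    intro c hc
    simp [Subst.iter] at hc
    exact ⟨fun _ => a, rfl, hc.symm ▸ rfl, fun i hi => absurd hi (Nat.not_lt_zero i)⟩
  | succ n ih =>
    intro c hc
    have hc' : c ∈ σ.apply (σ.iter n [a]) := hc
    obtain ⟨b, hb, hcb⟩ := TL.mem_apply.mp hc'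
    obtain ⟨f, hf0, hfn, hfs⟩ := ih hb
    refine ⟨fun i => if i ≤ n then f i else c, by simp [hf0], by simp, ?_⟩
    intro i hi
    show (if i + 1 ≤ n then f (i + 1) else c) ∈ σ.1 (if i ≤ n then f i else c)
    rcases Nat.lt_or_ge i n with hlt | hge
    · have e1 : i + 1 ≤ n := by omega
      have e2 : i ≤ n := by omega
      rw [if_pos e1, if_pos e2]
      exact hfs i hlt
    · have hin : i = n := by omega
      have e1 : ¬ (i + 1 ≤ n) := by omega
      have e2 : i ≤ n := by omega
      rw [if_neg e1, if_pos e2, hin, hfn]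
      exact hcb

theorem TL.chain_mem {σ : Subst A} {f : ℕ → A} {n : ℕ}
    (hf : ∀ i < n, f (i + 1) ∈ σ.1 (f i)) :
    ∀ p k, p + k ≤ n → f (p + k) ∈ σ.iter k [f p] := by
  intro p k
  induction k with
  | zero => intro _; simp [Subst.iter]
  | succ k ih =>
    intro hle
    have h1 := ih (by omega)
    have h2 : f (p + k + 1) ∈ σ.iter 1 [f (p + k)] := by
      simpa [Subst.iter, Subst.apply] using hf (p + k) (by omega)
    exact TL.mem_iter_trans h1 h2

theorem TL.apply_fixed {σ : Subst A} : ∀ {w : List A}, (∀ b ∈ w, σ.1 b = [b]) →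
    σ.apply w = w
  | [], _ => rfl
  | a :: t, h => by
    simp only [Subst.apply]
    rw [h a List.mem_cons_self,
      TL.apply_fixed (fun b hb => h b (List.mem_cons_of_mem a hb))]
    rfl

theorem TL.iter_fixed {σ : Subst A} {w : List A} (h : ∀ b ∈ w, σ.1 b = [b]) :
    ∀ k, σ.iter k w = w
  | 0 => rfl
  | k + 1 => by
    show σ.apply (σ.iter k w) = w
    rw [TL.iter_fixed h k, TL.apply_fixed h]

end TLaux

/-- **Terminal letters.** If `σ^ω(a)` is a finite nonempty word `u`, then
`σ^n(a) = u` for all `n ≥ |Σ|`. -/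
theorem omegaPow_terminal_letters {A : Type u} [Fintype A] [Nonempty A]
    (σ : Subst A) (a : A) (u : List A) (hu : u ≠ [])
    (h : σ.omegaPow [a] = Word.fin u) :
    ∀ n, Fintype.card A ≤ n → σ.iter n [a] = u := by
  intro n hn
  set d := Fintype.card A with hd
  have h' : limWord (fun n => σ.iter n [a]) = Word.fin u := h
  rw [limWord] at h'
  by_cases h1 : ∃ v : List A, ∃ N : ℕ, ∀ n, N ≤ n → σ.iter n [a] = v
  case neg =>
    rw [dif_neg h1] at h'
    by_cases h2 : ∃ β : ℕ → A, ∀ j : ℕ, ∃ N : ℕ, ∀ n, N ≤ n →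
        (σ.iter n [a]).take j = (List.range j).map β
    · rw [dif_pos h2] at h'; cases h'
    · rw [dif_neg h2] at h'; cases h'
  case pos =>
  rw [dif_pos h1] at h'
  have hv : h1.choose = u := by injection h'
  obtain ⟨N, hN⟩ := h1.choose_spec
  rw [hv] at hN
  have hfixu : ∀ b ∈ u, σ.1 b = [b] := by
    apply TL.apply_eq_self
    have hN1 := hN N (le_refl N)
    have hN2 := hN (N + 1) (by omega)
    calc σ.apply u = σ.iter (N + 1) [a] := by rw [← hN1]; rfl
    _ = u := hN2
  have hkey : ∀ c ∈ σ.iter d [a], σ.1 c = [c] := by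
    intro c hc
    obtain ⟨f, hf0, hfd, hfs⟩ := TL.exists_chain hc
    obtain ⟨i0, j0, hne, hfe0⟩ := Fintype.exists_ne_map_eq_of_card_lt
      (fun i : Fin (d + 1) => f i.1) (by simp [hd])
    have hne' : i0.1 ≠ j0.1 := fun hh => hne (Fin.ext hh)
    obtain ⟨i, j, hij, hjd, hfe⟩ : ∃ i j : ℕ, i < j ∧ j ≤ d ∧ f i = f j := by
      rcases Nat.lt_or_ge i0.1 j0.1 with hlt | hge
      · exact ⟨i0.1, j0.1, hlt, by omega, hfe0⟩
      · exact ⟨j0.1, i0.1, by omega, by omega, hfe0.symm⟩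
    apply hfixu
    have hc_i : f i ∈ σ.iter i [a] := by
      have := TL.chain_mem hfs 0 i (by omega)
      simpa [hf0] using this
    have hloop1 : f i ∈ σ.iter (j - i) [f i] := by
      have := TL.chain_mem hfs i (j - i) (by omega)
      rw [show i + (j - i) = j by omega] at this
      simpa [← hfe] using this
    have hloopk : ∀ k, f i ∈ σ.iter (k * (j - i)) [f i] := by
      intro k
      induction k with
      | zero => simp [Subst.iter]
      | succ k ih =>
        have := TL.mem_iter_trans ih hloop1
        simpa [Nat.succ_mul] using this
    have hc_tail : c ∈ σ.iter (d - j) [f i] := by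
      have := TL.chain_mem hfs j (d - j) (by omega)
      rw [show j + (d - j) = d by omega, hfd] at this
      simpa [← hfe] using this
    have hmem : c ∈ σ.iter (i + (N * (j - i) + (d - j))) [a] :=
      TL.mem_iter_trans hc_i (TL.mem_iter_trans (hloopk N) hc_tail)
    have hbig : N ≤ i + (N * (j - i) + (d - j)) := by
      have h3 : N ≤ N * (j - i) := Nat.le_mul_of_pos_right N (by omega)
      omega
    rw [hN _ hbig] at hmem
    exact hmem
  have hdu : σ.iter d [a] = u := by
    have hM : σ.iter (d + N) [a] = u := hN _ (by omega)
    rw [TL.iter_add, TL.iter_fixed hkey] at hM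
    exact hM
  have hsplit := TL.iter_add σ d (n - d) [a]
  rw [show d + (n - d) = n by omega] at hsplit
  rw [hsplit, hdu]
  exact TL.iter_fixed hfixu (n - d)
end
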